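/- arXiv:2210.12986 — 2 statements merged into one kernel-verified Lean document; each statement's English description precedes it below -/
import Mathlib

section
/- Let m, m′ ∈ 𝔐 with m ≠ m′, and let μ ∈ ℂⁿ. Then ∫_{[0,1]^{2n}} exp(−2π Σ_{α,β=1}^n W_{αβ} Im(z_α(t) + μ_α) Im(z_β(t) + μ_β)) · θ_m(z(t) + μ) · conj(θ_{m′}(z(t) + μ)) dt = 0, where for t = (t_1, …, t_{2n}) ∈ [0,1]^{2n} the point z(t) ∈ ℂⁿ is defined by z_α(t) = δ_α t_α + Σ_{l=1}^n τ_{αl} t_{n+l}. That is, the theta functions θ_m(· + μ) for distinct m ∈ 𝔐 are orthogonal with respect to the L²-inner product over a fundamental domain of the lattice, weighted by the metric h_μ. -/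
open scoped BigOperators
open Complex MeasureTheory

/-- The theta function `θ_m` associated with `Z`, `δ` and the index `m`. -/
noncomputable def theta (n : ℕ) (Z : Matrix (Fin n) (Fin n) ℂ) (δ : Fin n → ℤ)
    (m : Fin n → ℤ) (z : Fin n → ℂ) : ℂ :=
  ∑' k : Fin n → ℤ,
    Complex.exp (
      Real.pi * Complex.I * ∑ α, ∑ β, (k α : ℂ) * (k β : ℂ) * Z α β
      + 2 * Real.pi * Complex.I * ∑ α, ∑ β, Z α β * ((m α : ℂ) / (δ α : ℂ)) * (k β : ℂ)
      + 2 * Real.pi * Complex.I * ∑ α, (((k α : ℂ) * (δ α : ℂ) + (m α : ℂ)) / (δ α : ℂ)) * z α)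

/-- The parametrization `z(t)` of the fundamental domain of the lattice:
`z_α(t) = δ_α t_α + Σ_l τ_{αl} t_{n+l}` for `t ∈ ℝ^{2n}`. -/
noncomputable def latticeParam (n : ℕ) (Z : Matrix (Fin n) (Fin n) ℂ) (δ : Fin n → ℤ)
    (t : Fin (2 * n) → ℝ) (α : Fin n) : ℂ :=
  (δ α : ℂ) * (t ⟨α.1, by have := α.isLt; omega⟩ : ℝ)
    + ∑ l : Fin n, Z α l * (t ⟨n + l.1, by have := l.isLt; omega⟩ : ℝ)

lemma theta_shift (n : ℕ) (Z : Matrix (Fin n) (Fin n) ℂ) (δ : Fin n → ℤ)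
    (m : Fin n → ℤ) (α₀ : Fin n) (hδ0 : (δ α₀ : ℂ) ≠ 0) (z : Fin n → ℂ) :
    theta n Z δ m (fun β => z β + if β = α₀ then 1 else 0)
      = Complex.exp (2 * Real.pi * Complex.I * ((m α₀ : ℂ) / (δ α₀ : ℂ)))
        * theta n Z δ m z := by
  unfold theta
  rw [← tsum_mul_left]
  refine tsum_congr fun k => ?_
  have h1 : ∑ α, (((k α : ℂ) * (δ α : ℂ) + (m α : ℂ)) / (δ α : ℂ))
        * (z α + if α = α₀ then 1 else 0)
      = (∑ α, (((k α : ℂ) * (δ α : ℂ) + (m α : ℂ)) / (δ α : ℂ)) * z α)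
        + ((k α₀ : ℂ) + (m α₀ : ℂ) / (δ α₀ : ℂ)) := by
    simp only [mul_add, Finset.sum_add_distrib, mul_ite, mul_one, mul_zero]
    congr 1
    rw [Finset.sum_ite_eq' Finset.univ α₀]
    simp only [Finset.mem_univ, if_true]
    field_simp
  rw [h1]
  rw [show (Real.pi : ℂ) * Complex.I * ∑ α, ∑ β, (k α : ℂ) * (k β : ℂ) * Z α β
      + 2 * Real.pi * Complex.I * ∑ α, ∑ β, Z α β * ((m α : ℂ) / (δ α : ℂ)) * (k β : ℂ)
      + 2 * Real.pi * Complex.I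
        * ((∑ α, (((k α : ℂ) * (δ α : ℂ) + (m α : ℂ)) / (δ α : ℂ)) * z α)
          + ((k α₀ : ℂ) + (m α₀ : ℂ) / (δ α₀ : ℂ)))
      = 2 * Real.pi * Complex.I * ((m α₀ : ℂ) / (δ α₀ : ℂ))
        + ((Real.pi : ℂ) * Complex.I * ∑ α, ∑ β, (k α : ℂ) * (k β : ℂ) * Z α β
          + 2 * Real.pi * Complex.I * ∑ α, ∑ β, Z α β * ((m α : ℂ) / (δ α : ℂ)) * (k β : ℂ)
          + 2 * Real.pi * Complex.I * ∑ α, (((k α : ℂ) * (δ α : ℂ) + (m α : ℂ)) / (δ α : ℂ)) * z α)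
        + (k α₀ : ℂ) * (2 * Real.pi * Complex.I) from by ring]
  rw [Complex.exp_add, Complex.exp_add, Complex.exp_int_mul_two_pi_mul_I, mul_one]

lemma latticeParam_shift (n : ℕ) (Z : Matrix (Fin n) (Fin n) ℂ) (δ : Fin n → ℤ)
    (α₀ : Fin n) (hδ0 : (δ α₀ : ℝ) ≠ 0) (idx : Fin (2 * n)) (hidx : idx.1 = α₀.1)
    (t : Fin (2 * n) → ℝ) (β : Fin n) :
    latticeParam n Z δ (t + fun i => if i = idx then (δ α₀ : ℝ)⁻¹ else 0) β
      = latticeParam n Z δ t β + (if β = α₀ then 1 else 0) := by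
  have h2 : ∀ l : Fin n, (⟨n + l.1, by have := l.isLt; omega⟩ : Fin (2 * n)) ≠ idx := by
    intro l h
    have hlt := α₀.isLt
    rw [Fin.ext_iff] at h
    simp only [hidx] at h
    omega
  have h1 : ∀ (hb : β.1 < 2 * n), ((⟨β.1, hb⟩ : Fin (2 * n)) = idx) ↔ β = α₀ := by
    intro hb
    rw [Fin.ext_iff, Fin.ext_iff, hidx]
  unfold latticeParam
  simp only [Pi.add_apply, h2, if_neg, add_zero]
  by_cases hβ : β = α₀
  · subst hβ
    simp only [h1, if_pos rfl, if_pos]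
    push_cast
    have hne : ((δ β : ℤ) : ℂ) ≠ 0 := by exact_mod_cast hδ0
    simp only [add_zero, mul_add, mul_inv_cancel₀ hne]
    ring
  · simp only [h1, hβ, if_neg, not_false_iff, add_zero]
/-- Orthogonality of the theta functions `θ_m(· + μ)`, `m ∈ 𝔐`, with
respect to the `L²`-inner product over a fundamental domain, weighted by the
metric `h_μ`. -/
theorem theta_orthogonal (n : ℕ) (hn : 1 ≤ n)
    (Z : Matrix (Fin n) (Fin n) ℂ)
    (hZsymm : ∀ α β, Z α β = Z β α)
    (hZpos : (Z.map Complex.im).PosDef)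
    (W : Matrix (Fin n) (Fin n) ℝ) (hW : W = (Z.map Complex.im)⁻¹)
    (δ : Fin n → ℤ) (hδ : ∀ α, 0 < δ α)
    (m m' : Fin n → ℤ)
    (hm : ∀ α, 0 ≤ m α ∧ m α < δ α) (hm' : ∀ α, 0 ≤ m' α ∧ m' α < δ α)
    (hne : m ≠ m') (μ : Fin n → ℂ) :
    ∫ t in Set.Icc (0 : Fin (2 * n) → ℝ) 1,
      ((Real.exp (-2 * Real.pi * ∑ α, ∑ β, W α β
          * (latticeParam n Z δ t α + μ α).im * (latticeParam n Z δ t β + μ β).im) : ℝ) : ℂ)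
        * theta n Z δ m (fun α => latticeParam n Z δ t α + μ α)
        * (starRingEnd ℂ) (theta n Z δ m' (fun α => latticeParam n Z δ t α + μ α)) = 0 := by
  obtain ⟨α₀, hα₀⟩ : ∃ α, m α ≠ m' α := Function.ne_iff.mp hne
  have hD : 0 < δ α₀ := hδ α₀
  have hδR : (δ α₀ : ℝ) ≠ 0 := by exact_mod_cast hD.ne'
  have hδC : (δ α₀ : ℂ) ≠ 0 := by exact_mod_cast hD.ne'
  have hδRpos : (0 : ℝ) < (δ α₀ : ℝ) := by exact_mod_cast hD
  have hcpos : (0 : ℝ) < (δ α₀ : ℝ)⁻¹ := by positivity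
  set idx : Fin (2 * n) := ⟨α₀.1, by have := α₀.isLt; omega⟩ with hidxdef
  set d : ℤ := m α₀ - m' α₀ with hddef
  have hd0 : d ≠ 0 := sub_ne_zero.mpr hα₀
  have hd1 : -δ α₀ < d := by have h1 := (hm α₀).1; have h2 := (hm' α₀).2; omega
  have hd2 : d < δ α₀ := by have h1 := (hm α₀).2; have h2 := (hm' α₀).1; omega
  set D : ℕ := (δ α₀).toNat with hDdef
  have hDcast : ((D : ℕ) : ℝ) = (δ α₀ : ℝ) := by
    rw [hDdef]; exact_mod_cast Int.toNat_of_nonneg hD.le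
  set ω : ℂ := Complex.exp (2 * Real.pi * Complex.I * ((d : ℂ) / (δ α₀ : ℂ))) with hωdef
  set F : (Fin (2 * n) → ℝ) → ℂ := fun t =>
      ((Real.exp (-2 * Real.pi * ∑ α, ∑ β, W α β
          * (latticeParam n Z δ t α + μ α).im * (latticeParam n Z δ t β + μ β).im) : ℝ) : ℂ)
        * theta n Z δ m (fun α => latticeParam n Z δ t α + μ α)
        * (starRingEnd ℂ) (theta n Z δ m' (fun α => latticeParam n Z δ t α + μ α)) with hFdef
  -- quasi-periodicity
  have hF : ∀ t, F (t + fun i => if i = idx then (δ α₀ : ℝ)⁻¹ else 0) = ω * F t := by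
    intro t
    have hlp : ∀ β, latticeParam n Z δ (t + fun i => if i = idx then (δ α₀ : ℝ)⁻¹ else 0) β
        = latticeParam n Z δ t β + (if β = α₀ then 1 else 0) :=
      fun β => latticeParam_shift n Z δ α₀ hδR idx rfl t β
    have him : ∀ β, (latticeParam n Z δ
          (t + fun i => if i = idx then (δ α₀ : ℝ)⁻¹ else 0) β + μ β).im
        = (latticeParam n Z δ t β + μ β).im := by
      intro β
      rw [hlp β]
      by_cases h : β = α₀ <;> simp [h]
    have hz : (fun β => latticeParam n Z δ
          (t + fun i => if i = idx then (δ α₀ : ℝ)⁻¹ else 0) β + μ β)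
        = (fun β => (latticeParam n Z δ t β + μ β) + if β = α₀ then 1 else 0) := by
      funext β
      rw [hlp β]
      ring
    rw [hFdef]
    simp only
    rw [hz]
    simp only [him]
    rw [theta_shift n Z δ m α₀ hδC, theta_shift n Z δ m' α₀ hδC]
    rw [map_mul, ← Complex.exp_conj]
    have hconj : (starRingEnd ℂ) (2 * (Real.pi : ℂ) * Complex.I * ((m' α₀ : ℂ) / (δ α₀ : ℂ)))
        = -(2 * (Real.pi : ℂ) * Complex.I * ((m' α₀ : ℂ) / (δ α₀ : ℂ))) := by
      simp only [map_mul, map_div₀, Complex.conj_I, Complex.conj_ofReal, map_intCast,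
        map_ofNat]
      ring
    rw [hconj]
    have hωeq : Complex.exp (2 * (Real.pi : ℂ) * Complex.I * ((m α₀ : ℂ) / (δ α₀ : ℂ)))
        * Complex.exp (-(2 * (Real.pi : ℂ) * Complex.I * ((m' α₀ : ℂ) / (δ α₀ : ℂ)))) = ω := by
      rw [hωdef, ← Complex.exp_add]
      congr 1
      rw [hddef]
      push_cast
      ring
    rw [← hωeq]
    ring
  -- iterated quasi-periodicity
  have hFiter : ∀ (j : ℕ) (t : Fin (2 * n) → ℝ),
      F (t + fun i => if i = idx then (j : ℝ) * (δ α₀ : ℝ)⁻¹ else 0) = ω ^ j * F t := by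
    intro j
    induction j with
    | zero =>
      intro t
      have h0 : (fun i : Fin (2 * n) => if i = idx then ((0 : ℕ) : ℝ) * (δ α₀ : ℝ)⁻¹ else 0)
          = (0 : Fin (2 * n) → ℝ) := by
        funext i
        by_cases hi : i = idx <;> simp [hi]
      rw [h0, add_zero, pow_zero, one_mul]
    | succ j ih =>
      intro t
      have hsplit : (fun i : Fin (2 * n) =>
            if i = idx then ((j + 1 : ℕ) : ℝ) * (δ α₀ : ℝ)⁻¹ else 0)
          = (fun i : Fin (2 * n) => if i = idx then (j : ℝ) * (δ α₀ : ℝ)⁻¹ else 0)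
            + fun i => if i = idx then (δ α₀ : ℝ)⁻¹ else 0 := by
        funext i
        by_cases hi : i = idx
        · simp only [Pi.add_apply, if_pos hi]
          push_cast
          ring
        · simp [Pi.add_apply, hi]
      rw [hsplit, ← add_assoc, hF, ih, pow_succ]
      ring
  -- boxes
  set S : ℕ → Set (Fin (2 * n) → ℝ) := fun j => Set.univ.pi fun i =>
      if i = idx then Set.Ico ((j : ℝ) * (δ α₀ : ℝ)⁻¹) (((j : ℝ) + 1) * (δ α₀ : ℝ)⁻¹)
      else Set.Icc 0 1 with hSdef
  have hSmeas : ∀ j, MeasurableSet (S j) := by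
    intro j
    refine MeasurableSet.univ_pi fun i => ?_
    by_cases hi : i = idx <;> simp [hi, measurableSet_Ico, measurableSet_Icc]
  have hmemS : ∀ (j : ℕ) (x : Fin (2 * n) → ℝ),
      (x + fun i => if i = idx then (j : ℝ) * (δ α₀ : ℝ)⁻¹ else 0) ∈ S j ↔ x ∈ S 0 := by
    intro j x
    rw [hSdef]
    simp only [Set.mem_univ_pi]
    refine forall_congr' fun i => ?_
    have hexp : ((j : ℝ) + 1) * (δ α₀ : ℝ)⁻¹ = (j : ℝ) * (δ α₀ : ℝ)⁻¹ + (δ α₀ : ℝ)⁻¹ := by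
      ring
    by_cases hi : i = idx
    · subst hi
      simp only [Pi.add_apply, eq_self_iff_true, if_true, Set.mem_Ico, Nat.cast_zero,
        zero_mul, zero_add, one_mul]
      constructor
      · rintro ⟨h1, h2⟩
        exact ⟨by linarith, by linarith⟩
      · rintro ⟨h1, h2⟩
        exact ⟨by linarith, by linarith⟩
    · simp [Pi.add_apply, hi]
  have hstep : ∀ j : ℕ, (∫ x in S j, F x) = ω ^ j * ∫ x in S 0, F x := by
    intro j
    have h2 : ∀ x : Fin (2 * n) → ℝ,
        (S j).indicator F (x + fun i => if i = idx then (j : ℝ) * (δ α₀ : ℝ)⁻¹ else 0)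
          = ω ^ j * (S 0).indicator F x := by
      intro x
      by_cases hx : x ∈ S 0
      · rw [Set.indicator_of_mem ((hmemS j x).mpr hx), Set.indicator_of_mem hx, hFiter]
      · rw [Set.indicator_of_notMem (fun hmem => hx ((hmemS j x).mp hmem)),
          Set.indicator_of_notMem hx, mul_zero]
    calc (∫ x in S j, F x)
        = ∫ x, (S j).indicator F x := (integral_indicator (hSmeas j)).symm
      _ = ∫ x, (S j).indicator F
            (x + fun i => if i = idx then (j : ℝ) * (δ α₀ : ℝ)⁻¹ else 0) :=
          (integral_add_right_eq_self ((S j).indicator F) _).symm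
      _ = ∫ x, ω ^ j * (S 0).indicator F x := by simp_rw [h2]
      _ = ω ^ j * ∫ x, (S 0).indicator F x := integral_const_mul _ _
      _ = ω ^ j * ∫ x in S 0, F x := by rw [integral_indicator (hSmeas 0)]
  have hsub : ∀ j : ℕ, j < D → S j ⊆ Set.Icc (0 : Fin (2 * n) → ℝ) 1 := by
    intro j hj x hx
    rw [hSdef] at hx
    simp only [Set.mem_univ_pi] at hx
    rw [Set.mem_Icc]
    constructor <;> intro i <;> have hxi := hx i
    · by_cases hi : i = idx
      · rw [if_pos hi] at hxi
        have := hxi.1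
        have h0 : (0:ℝ) ≤ (j : ℝ) * (δ α₀ : ℝ)⁻¹ := by positivity
        show (0 : ℝ) ≤ x i
        linarith
      · rw [if_neg hi] at hxi
        exact hxi.1
    · by_cases hi : i = idx
      · rw [if_pos hi] at hxi
        have h1 := hxi.2
        have h2 : ((j : ℝ) + 1) * (δ α₀ : ℝ)⁻¹ ≤ (D : ℝ) * (δ α₀ : ℝ)⁻¹ := by
          have : ((j : ℝ) + 1) ≤ (D : ℝ) := by exact_mod_cast hj
          nlinarith
        have h3 : ((D : ℕ) : ℝ) * (δ α₀ : ℝ)⁻¹ = 1 := by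
          rw [hDcast, mul_inv_cancel₀ hδR]
        show x i ≤ 1
        linarith
      · rw [if_neg hi] at hxi
        exact hxi.2
  have hdisj : (↑(Finset.range D) : Set ℕ).Pairwise (Function.onFun Disjoint S) := by
    have key : ∀ a b : ℕ, a < b → Disjoint (S a) (S b) := by
      intro a b hab
      refine Set.disjoint_left.mpr fun x hxa hxb => ?_
      rw [hSdef] at hxa hxb
      simp only [Set.mem_univ_pi] at hxa hxb
      have h1 := hxa idx
      have h2 := hxb idx
      rw [if_pos rfl] at h1 h2
      have hab' : ((a : ℝ) + 1) ≤ (b : ℝ) := by exact_mod_cast hab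
      have := h1.2
      have := h2.1
      nlinarith
    intro j hj j' hj' hjj'
    rcases hjj'.lt_or_gt with h | h
    · exact key _ _ h
    · exact (key _ _ h).symm
  have hface : volume {x : Fin (2 * n) → ℝ | x idx = 1} = 0 := by
    have heq : {x : Fin (2 * n) → ℝ | x idx = 1}
        = Set.univ.pi (fun i => if i = idx then ({1} : Set ℝ) else Set.univ) := by
      ext x
      simp only [Set.mem_setOf_eq, Set.mem_univ_pi]
      constructor
      · intro h i
        rcases eq_or_ne i idx with hi | hi
        · simp [hi, h]
        · simp [hi]
      · intro h
        have := h idx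
        simpa using this
    rw [heq, volume_pi_pi]
    refine Finset.prod_eq_zero (Finset.mem_univ idx) ?_
    simp
  have hae : Set.Icc (0 : Fin (2 * n) → ℝ) 1 =ᵐ[volume] ⋃ j ∈ Finset.range D, S j := by
    refine (MeasureTheory.ae_eq_set).mpr ⟨?_, ?_⟩
    · refine measure_mono_null ?_ hface
      rintro x ⟨hx, hxU⟩
      rw [Set.mem_Icc] at hx
      simp only [Set.mem_setOf_eq]
      by_contra hne1
      apply hxU
      have hx0 : (0:ℝ) ≤ x idx := hx.1 idx
      have hx1 : x idx ≤ 1 := hx.2 idx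
      have hxlt : x idx < 1 := lt_of_le_of_ne hx1 hne1
      -- find the box index
      set j : ℕ := (⌊x idx * (δ α₀ : ℝ)⌋).toNat with hjdef
      have hfl0 : (0:ℤ) ≤ ⌊x idx * (δ α₀ : ℝ)⌋ := Int.floor_nonneg.mpr (by positivity)
      have hjR : (j : ℝ) = (⌊x idx * (δ α₀ : ℝ)⌋ : ℝ) := by
        rw [hjdef]; exact_mod_cast Int.toNat_of_nonneg hfl0
      have hjlt : j < D := by
        have hlt : ⌊x idx * (δ α₀ : ℝ)⌋ < δ α₀ := Int.floor_lt.mpr (by nlinarith)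
        omega
      refine Set.mem_biUnion (Finset.mem_range.mpr hjlt) ?_
      rw [hSdef]
      simp only [Set.mem_univ_pi]
      intro i
      by_cases hi : i = idx
      · rw [if_pos hi, hi, Set.mem_Ico]
        constructor
        · rw [hjR]
          rw [inv_eq_one_div, mul_one_div, div_le_iff₀ hδRpos]
          exact Int.floor_le _
        · rw [hjR]
          rw [inv_eq_one_div, mul_one_div, lt_div_iff₀ hδRpos]
          have := Int.lt_floor_add_one (x idx * (δ α₀ : ℝ))
          push_cast
          linarith
      · rw [if_neg hi]
        exact ⟨hx.1 i, hx.2 i⟩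
    · have hUsub : (⋃ j ∈ Finset.range D, S j) ⊆ Set.Icc (0 : Fin (2 * n) → ℝ) 1 :=
        Set.iUnion₂_subset fun j hj => hsub j (Finset.mem_range.mp hj)
      rw [Set.diff_eq_empty.mpr hUsub]
      exact measure_empty
  have hω1 : ω ≠ 1 := by
    rw [hωdef]
    intro h
    rw [Complex.exp_eq_one_iff] at h
    obtain ⟨N, hN⟩ := h
    have h2πI : (2 * (Real.pi : ℂ) * Complex.I) ≠ 0 := by
      simp [Real.pi_ne_zero, Complex.I_ne_zero, Complex.ofReal_ne_zero]
    have h3 : (d : ℂ) / (δ α₀ : ℂ) = (N : ℂ) :=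
      mul_left_cancel₀ h2πI (by linear_combination hN)
    have h4 : (d : ℂ) = ((N * δ α₀ : ℤ) : ℂ) := by
      push_cast
      field_simp at h3
      linear_combination h3
    have h5 : d = N * δ α₀ := by exact_mod_cast h4
    rcases lt_trichotomy N 0 with h | h | h
    · have h6 : N * δ α₀ ≤ -1 * δ α₀ := mul_le_mul_of_nonneg_right (by omega) hD.le
      rw [← h5] at h6
      omega
    · rw [h, zero_mul] at h5
      exact hd0 h5
    · have h6 : 1 * δ α₀ ≤ N * δ α₀ := mul_le_mul_of_nonneg_right (by omega) hD.le
      rw [← h5] at h6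
      omega
  have hωD : ω ^ D = 1 := by
    rw [hωdef, ← Complex.exp_nat_mul]
    have hDC : ((D : ℕ) : ℂ) = (δ α₀ : ℂ) := by
      rw [hDdef]; exact_mod_cast Int.toNat_of_nonneg hD.le
    rw [hDC, show (δ α₀ : ℂ) * (2 * Real.pi * Complex.I * ((d : ℂ) / (δ α₀ : ℂ)))
        = (d : ℂ) * (2 * Real.pi * Complex.I) from by field_simp]
    exact Complex.exp_int_mul_two_pi_mul_I d
  by_cases hint : IntegrableOn F (Set.Icc (0 : Fin (2 * n) → ℝ) 1) volume
  · calc (∫ t in Set.Icc (0 : Fin (2 * n) → ℝ) 1, F t)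
        = ∫ t in ⋃ j ∈ Finset.range D, S j, F t := setIntegral_congr_set hae
      _ = ∑ j ∈ Finset.range D, ∫ t in S j, F t :=
          integral_biUnion_finset (Finset.range D) (fun j _ => hSmeas j) hdisj
            (fun j hj => hint.mono_set (hsub j (Finset.mem_range.mp hj)))
      _ = ∑ j ∈ Finset.range D, ω ^ j * ∫ t in S 0, F t :=
          Finset.sum_congr rfl fun j _ => hstep j
      _ = ((ω ^ D - 1) / (ω - 1)) * ∫ t in S 0, F t := by
          rw [← Finset.sum_mul, geom_sum_eq hω1]
      _ = 0 := by rw [hωD, sub_self, zero_div, zero_mul]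
  · exact integral_undef hint
end

section
/- Let V be a real vector space and let p_1, …, p_n, q_1, …, q_n : V → ℝ be linear functionals. Define ℂ-valued linear functionals dμ_α = p_α + i q_α and conj(dμ_α) = p_α − i q_α, and define real linear functionals η_α = δ_α Σ_{β=1}^n W_{αβ} q_β and η_{n+α} = −p_α + Σ_{β,γ=1}^n (Re Z)_{αβ} W_{βγ} q_γ for α = 1, …, n. Then, with Δ = Π_{α=1}^n δ_α, one has the identity of ℂ-valued alternating 2-forms on V: Σ_{α=1}^n (Δ/δ_α) η_α ∧ η_{n+α} = (i/2) Δ Σ_{α,β=1}^n W_{αβ} dμ_α ∧ conj(dμ_β), where for linear functionals f, g the wedge is (f ∧ g)(u, w) = f(u)g(w) − f(w)g(u). -/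
open scoped BigOperators
open Complex Matrix

lemma swapW_sum {n : ℕ} {K : Type*} [CommRing K] (W : Fin n → Fin n → K)
    (hW : ∀ α β, W α β = W β α) (F : Fin n → Fin n → K) :
    ∑ α, ∑ β, W α β * F α β = ∑ α, ∑ β, W α β * F β α := by
  rw [Finset.sum_comm]
  exact Finset.sum_congr rfl fun _ _ => Finset.sum_congr rfl fun _ _ => by rw [hW]

lemma sum4_swap2 {M : Type*} [AddCommMonoid M] {n : ℕ}
    (f : Fin n → Fin n → Fin n → Fin n → M) :
    ∑ a, ∑ b, ∑ c, ∑ d, f a b c d = ∑ a, ∑ b, ∑ c, ∑ d, f b a d c :=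
  Finset.sum_comm.trans
    (Finset.sum_congr rfl fun _ _ => Finset.sum_congr rfl fun _ _ => Finset.sum_comm)

lemma Asymm {n : ℕ} (W R : Fin n → Fin n → ℝ)
    (hR : ∀ α β, R α β = R β α) (x y : Fin n → ℝ) :
    ∑ α, (∑ β, W α β * x β) * (∑ β, ∑ γ, R α β * W β γ * y γ)
      = ∑ α, (∑ β, W α β * y β) * (∑ β, ∑ γ, R α β * W β γ * x γ) := by
  simp only [Finset.sum_mul, Finset.mul_sum]
  refine (sum4_swap2 _).trans ?_
  refine Finset.sum_congr rfl fun a _ => Finset.sum_congr rfl fun b _ =>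
    Finset.sum_congr rfl fun c _ => Finset.sum_congr rfl fun d _ => ?_
  rw [hR b a]
  ring

/-- Let `p_α, q_α : V → ℝ` be linear functionals, set
`dμ_α = p_α + i q_α`, `conj(dμ_α) = p_α − i q_α`,
`η_α = δ_α Σ_β W_{αβ} q_β` and `η_{n+α} = −p_α + Σ_{β,γ} (Re Z)_{αβ} W_{βγ} q_γ`.
Then, with `Δ = Π δ_α`, one has the identity of `ℂ`-valued alternating `2`-forms
(evaluated on a pair of vectors via `(f ∧ g)(u,w) = f(u)g(w) − f(w)g(u)`):
`Σ_α (Δ/δ_α) η_α ∧ η_{n+α} = (i/2) Δ Σ_{α,β} W_{αβ} dμ_α ∧ conj(dμ_β)`. -/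
theorem dual_polarization_identity (n : ℕ) (hn : 1 ≤ n)
    (Z : Matrix (Fin n) (Fin n) ℂ)
    (hZsymm : ∀ α β, Z α β = Z β α)
    (hZpos : (Z.map Complex.im).PosDef)
    (W : Matrix (Fin n) (Fin n) ℝ) (hW : W = (Z.map Complex.im)⁻¹)
    (δ : Fin n → ℤ) (hδ : ∀ α, 0 < δ α)
    (V : Type*) [AddCommGroup V] [Module ℝ V]
    (p q : Fin n → V →ₗ[ℝ] ℝ)
    (u w : V) :
    ∑ α : Fin n, (((∏ γ : Fin n, (δ γ : ℝ)) / (δ α : ℝ)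
        * (((δ α : ℝ) * ∑ β, W α β * q β u)
            * (-(p α w) + ∑ β, ∑ γ, (Z α β).re * W β γ * q γ w)
          - ((δ α : ℝ) * ∑ β, W α β * q β w)
            * (-(p α u) + ∑ β, ∑ γ, (Z α β).re * W β γ * q γ u)) : ℝ) : ℂ)
      = (Complex.I / 2) * ((∏ γ : Fin n, (δ γ : ℝ)) : ℂ)
        * ∑ α, ∑ β, (W α β : ℂ)
          * (((p α u : ℂ) + Complex.I * (q α u : ℝ))
              * ((p β w : ℂ) - Complex.I * (q β w : ℝ))
            - ((p α w : ℂ) + Complex.I * (q α w : ℝ))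
              * ((p β u : ℂ) - Complex.I * (q β u : ℝ))) := by
  have hδR : ∀ α, (δ α : ℝ) ≠ 0 := fun α => by
    exact_mod_cast (hδ α).ne'
  -- W is symmetric
  have hWs : ∀ α β, W α β = W β α := by
    have hsymm : (Z.map Complex.im)ᵀ = Z.map Complex.im := by
      ext i j
      simp only [Matrix.transpose_apply, Matrix.map_apply]
      rw [hZsymm]
    have hT : Wᵀ = W := by
      rw [hW, Matrix.transpose_nonsing_inv, hsymm]
    intro α β
    conv_lhs => rw [← hT]
    rfl
  have hRs : ∀ α β, (Z α β).re = (Z β α).re := fun α β => by rw [hZsymm]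
  set Δ : ℝ := ∏ γ : Fin n, (δ γ : ℝ) with hΔ
  set a : Fin n → ℝ := fun α => p α u with ha
  set b : Fin n → ℝ := fun α => q α u with hb
  set c : Fin n → ℝ := fun α => p α w with hc
  set d : Fin n → ℝ := fun α => q α w with hd
  -- real-side reduction
  have hL : (∑ α : Fin n, (Δ / (δ α : ℝ)
        * (((δ α : ℝ) * ∑ β, W α β * b β)
            * (-(c α) + ∑ β, ∑ γ, (Z α β).re * W β γ * d γ)
          - ((δ α : ℝ) * ∑ β, W α β * d β)
            * (-(a α) + ∑ β, ∑ γ, (Z α β).re * W β γ * b γ))))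
      = Δ * ∑ α, ∑ β, W α β * (a α * d β - b α * c β) := by
    have h1 : ∀ α : Fin n, Δ / (δ α : ℝ)
        * (((δ α : ℝ) * ∑ β, W α β * b β)
            * (-(c α) + ∑ β, ∑ γ, (Z α β).re * W β γ * d γ)
          - ((δ α : ℝ) * ∑ β, W α β * d β)
            * (-(a α) + ∑ β, ∑ γ, (Z α β).re * W β γ * b γ))
        = Δ * ((∑ β, W α β * b β)
            * (-(c α) + ∑ β, ∑ γ, (Z α β).re * W β γ * d γ)
          - (∑ β, W α β * d β)
            * (-(a α) + ∑ β, ∑ γ, (Z α β).re * W β γ * b γ)) := by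
      intro α
      rw [div_mul_eq_mul_div, div_eq_iff (hδR α)]
      ring
    rw [Finset.sum_congr rfl fun α _ => h1 α, ← Finset.mul_sum]
    congr 1
    have h2 : ∀ α : Fin n, (∑ β, W α β * b β)
            * (-(c α) + ∑ β, ∑ γ, (Z α β).re * W β γ * d γ)
          - (∑ β, W α β * d β)
            * (-(a α) + ∑ β, ∑ γ, (Z α β).re * W β γ * b γ)
        = ((∑ β, W α β * b β) * (∑ β, ∑ γ, (Z α β).re * W β γ * d γ)
            - (∑ β, W α β * d β) * (∑ β, ∑ γ, (Z α β).re * W β γ * b γ))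
          + (a α * (∑ β, W α β * d β) - c α * (∑ β, W α β * b β)) := fun α => by ring
    rw [Finset.sum_congr rfl fun α _ => h2 α, Finset.sum_add_distrib]
    have hA : (∑ α, (∑ β, W α β * b β) * (∑ β, ∑ γ, (Z α β).re * W β γ * d γ))
        = ∑ α, (∑ β, W α β * d β) * (∑ β, ∑ γ, (Z α β).re * W β γ * b γ) :=
      Asymm (fun i j => W i j) (fun i j => (Z i j).re) hRs b d
    rw [Finset.sum_sub_distrib, hA, sub_self, zero_add]
    have h4 : (∑ α, (a α * (∑ β, W α β * d β) - c α * (∑ β, W α β * b β)))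
        = (∑ α, ∑ β, W α β * (a α * d β)) - ∑ α, ∑ β, W α β * (c α * b β) := by
      rw [← Finset.sum_sub_distrib]
      refine Finset.sum_congr rfl fun α _ => ?_
      rw [Finset.mul_sum, Finset.mul_sum]
      congr 1 <;> exact Finset.sum_congr rfl fun β _ => by ring
    have h5 : (∑ α, ∑ β, W α β * (c α * b β)) = ∑ α, ∑ β, W α β * (c β * b α) :=
      swapW_sum (fun i j => W i j) hWs (fun i j => c i * b j)
    rw [h4, h5, ← Finset.sum_sub_distrib]
    refine Finset.sum_congr rfl fun α _ => ?_
    rw [← Finset.sum_sub_distrib]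
    exact Finset.sum_congr rfl fun β _ => by ring
  have hcast : (∑ α : Fin n, ((Δ / (δ α : ℝ)
        * (((δ α : ℝ) * ∑ β, W α β * b β)
            * (-(c α) + ∑ β, ∑ γ, (Z α β).re * W β γ * d γ)
          - ((δ α : ℝ) * ∑ β, W α β * d β)
            * (-(a α) + ∑ β, ∑ γ, (Z α β).re * W β γ * b γ)) : ℝ) : ℂ))
      = ((Δ * ∑ α, ∑ β, W α β * (a α * d β - b α * c β) : ℝ) : ℂ) := by
    rw [← hL]
    push_cast
    ring
  rw [hcast]
  -- complex side
  have hW' : ∀ α β : Fin n, ((W α β : ℝ) : ℂ) = ((W β α : ℝ) : ℂ) := fun α β => by rw [hWs]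
  set T : Fin n → Fin n → ℂ := fun α β =>
      (((a α : ℝ) : ℂ) + Complex.I * ((b α : ℝ) : ℂ))
        * (((c β : ℝ) : ℂ) - Complex.I * ((d β : ℝ) : ℂ))
      - (((c α : ℝ) : ℂ) + Complex.I * ((d α : ℝ) : ℂ))
        * (((a β : ℝ) : ℂ) - Complex.I * ((b β : ℝ) : ℂ)) with hT
  have key : (∑ α, ∑ β, ((W α β : ℝ) : ℂ)
        * (((a α : ℝ) : ℂ) * ((d β : ℝ) : ℂ) - ((b α : ℝ) : ℂ) * ((c β : ℝ) : ℂ)))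
      = (Complex.I / 2) * ∑ α, ∑ β, ((W α β : ℝ) : ℂ) * T α β := by
    have hswap : (∑ α, ∑ β, ((W α β : ℝ) : ℂ) * T α β)
        = ∑ α, ∑ β, ((W α β : ℝ) : ℂ) * T β α :=
      swapW_sum (fun i j => ((W i j : ℝ) : ℂ)) hW' T
    have hdbl : (2 : ℂ) * ((Complex.I / 2) * ∑ α, ∑ β, ((W α β : ℝ) : ℂ) * T α β)
        = ∑ α, ∑ β, ((W α β : ℝ) : ℂ) * ((Complex.I / 2) * (T α β + T β α)) := by
      rw [two_mul]
      nth_rewrite 2 [hswap]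
      simp only [Finset.mul_sum]
      rw [← Finset.sum_add_distrib]
      refine Finset.sum_congr rfl fun α _ => ?_
      rw [← Finset.sum_add_distrib]
      exact Finset.sum_congr rfl fun β _ => by ring
    have hterm : ∀ α β : Fin n, ((W α β : ℝ) : ℂ) * ((Complex.I / 2) * (T α β + T β α))
        = ((W α β : ℝ) : ℂ) * (((a α : ℝ):ℂ) * ((d β : ℝ):ℂ) - ((b α : ℝ):ℂ) * ((c β : ℝ):ℂ))
          + ((W α β : ℝ) : ℂ) * (((a β : ℝ):ℂ) * ((d α : ℝ):ℂ) - ((b β : ℝ):ℂ) * ((c α : ℝ):ℂ)) := by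
      intro α β
      rw [hT]
      linear_combination (((W α β : ℝ) : ℂ) * (((b α : ℝ):ℂ) * ((c β : ℝ):ℂ)
        + ((b β : ℝ):ℂ) * ((c α : ℝ):ℂ) - ((a α : ℝ):ℂ) * ((d β : ℝ):ℂ)
        - ((a β : ℝ):ℂ) * ((d α : ℝ):ℂ))) * Complex.I_sq
    have hsplit : (∑ α, ∑ β, ((W α β : ℝ) : ℂ) * ((Complex.I / 2) * (T α β + T β α)))
        = (∑ α, ∑ β, ((W α β : ℝ) : ℂ)
            * (((a α : ℝ):ℂ) * ((d β : ℝ):ℂ) - ((b α : ℝ):ℂ) * ((c β : ℝ):ℂ)))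
          + ∑ α, ∑ β, ((W α β : ℝ) : ℂ)
            * (((a β : ℝ):ℂ) * ((d α : ℝ):ℂ) - ((b β : ℝ):ℂ) * ((c α : ℝ):ℂ)) := by
      simp only [← Finset.sum_add_distrib]
      exact Finset.sum_congr rfl fun α _ => Finset.sum_congr rfl fun β _ => hterm α β
    have hswap2 : (∑ α, ∑ β, ((W α β : ℝ) : ℂ)
            * (((a β : ℝ):ℂ) * ((d α : ℝ):ℂ) - ((b β : ℝ):ℂ) * ((c α : ℝ):ℂ)))
        = ∑ α, ∑ β, ((W α β : ℝ) : ℂ)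
            * (((a α : ℝ):ℂ) * ((d β : ℝ):ℂ) - ((b α : ℝ):ℂ) * ((c β : ℝ):ℂ)) :=
      swapW_sum (fun i j => ((W i j : ℝ) : ℂ)) hW'
        (fun i j => ((a j : ℝ):ℂ) * ((d i : ℝ):ℂ) - ((b j : ℝ):ℂ) * ((c i : ℝ):ℂ))
    have hfull : (2:ℂ) * ((Complex.I / 2) * ∑ α, ∑ β, ((W α β : ℝ) : ℂ) * T α β)
        = (2:ℂ) * (∑ α, ∑ β, ((W α β : ℝ) : ℂ)
            * (((a α : ℝ):ℂ) * ((d β : ℝ):ℂ) - ((b α : ℝ):ℂ) * ((c β : ℝ):ℂ))) := by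
      rw [hdbl, hsplit, hswap2]; ring
    exact (mul_left_cancel₀ two_ne_zero hfull).symm
  have push : ((∑ α, ∑ β, W α β * (a α * d β - b α * c β) : ℝ) : ℂ)
      = ∑ α, ∑ β, ((W α β : ℝ) : ℂ)
          * (((a α : ℝ):ℂ) * ((d β : ℝ):ℂ) - ((b α : ℝ):ℂ) * ((c β : ℝ):ℂ)) := by
    push_cast
    rfl
  rw [Complex.ofReal_mul, push, key]
  simp only [hT, hΔ, ha, hb, hc, hd]
  push_cast
  ring
end
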